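/- Let C_γ be the Cambrian semilattice (the subposet of weak order on γ-sortable elements, which is a sub-meet-semilattice) with the edge-labeling λ_γ(u,v) = min(α_γ(v) \ α_γ(u)) on covering relations. Then for u ≤ v in C_γ, setting i₀ = min(α_γ(v) \ α_γ(u)): (i) the label i₀ appears on every maximal chain of [u,v] in C_γ; (ii) the labels along any maximal chain of [u,v] in C_γ are pairwise distinct. -/

import Mathlib

/-- The right weak order on a Coxeter group:
`u ≤ v` iff `ℓ(v) = ℓ(u) + ℓ(u⁻¹v)`. -/
def WeakLE {B W : Type*} [Group W] {M : CoxeterMatrix B} (cs : CoxeterSystem M W)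
    (u v : W) : Prop :=
  cs.length v = cs.length u + cs.length (u⁻¹ * v)

/-- The letter of the half-infinite word `γ^∞ = γ|γ|⋯` at (0-indexed) position `i`,
where the Coxeter element `γ` is given by the reduced word `γword`. -/
def gammaLetter {B : Type*} (γword : List B) (hne : γword ≠ []) (i : ℕ) : B :=
  γword.get ⟨i % γword.length, Nat.mod_lt _ (List.length_pos_iff.mpr hne)⟩

/-- The subword of `γ^∞` whose positions form the finite set `A`. -/
def posWord {B : Type*} (γword : List B) (hne : γword ≠ []) (A : Finset ℕ) : List B :=
  (A.sort (· ≤ ·)).map (gammaLetter γword hne)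

/-- `α` assigns to each `w ∈ W` the position set of its `γ`-sorting word: the subword of
`γ^∞` at positions `α w` is a reduced word for `w`, and `α w` is lexicographically least
(as an increasing sequence of positions) among all such position sets. -/
def IsSortingMap {B W : Type*} [Group W] {M : CoxeterMatrix B} (cs : CoxeterSystem M W)
    (γword : List B) (hne : γword ≠ []) (α : W → Finset ℕ) : Prop :=
  ∀ w : W,
    (cs.wordProd (posWord γword hne (α w)) = w ∧ cs.IsReduced (posWord γword hne (α w))) ∧
    ∀ A : Finset ℕ, cs.wordProd (posWord γword hne A) = w →
      cs.IsReduced (posWord γword hne A) →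
      α w = A ∨ List.Lex (· < ·) ((α w).sort (· ≤ ·)) (A.sort (· ≤ ·))

/-- `w` is `γ`-sortable, characterized via position sets: whenever a position `i ≥ n`
occurs in `α w`, so does `i − n` (blocks of the sorting word weakly decrease). -/
def SortableVia {W : Type*} (n : ℕ) (α : W → Finset ℕ) (w : W) : Prop :=
  ∀ i ∈ α w, n ≤ i → i - n ∈ α w

/-- Covering relation of the Cambrian semilattice `C_γ` (the `γ`-sortable elements
under weak order): `u ⋖_γ v` with no sortable element strictly between. -/
def CovC {W : Type*} (Sortable : W → Prop) (wle : W → W → Prop) (u v : W) : Prop :=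
  Sortable u ∧ Sortable v ∧ wle u v ∧ u ≠ v ∧
    ∀ z : W, Sortable z → wle u z → wle z v → z = u ∨ z = v

/-- `c` is a maximal (saturated) chain of the interval `[u,v]_γ` in the Cambrian
semilattice. -/
def MaxChainC {W : Type*} (Sortable : W → Prop) (wle : W → W → Prop)
    (u v : W) (c : List W) : Prop :=
  c.Chain' (CovC Sortable wle) ∧ c.head? = some u ∧ c.getLast? = some v ∧
    ∀ z ∈ c, Sortable z

/-- The label sequence of a chain. -/
def labelSeqC {W : Type*} (lab : W → W → ℕ) (c : List W) : List ℕ :=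
  List.zipWith lab c c.tail

/-- The Cambrian edge-labeling `λ_γ(u,v) = min (α_γ(v) \ α_γ(u))`. -/
def cambLabel {W : Type*} (α : W → Finset ℕ) (u v : W) : ℕ :=
  WithTop.untopD 0 (α v \ α u).min

/-!
Along a chain `u = c₀ ⋖ c₁ ⋖ ⋯ ⋖ c_m = v` of `C_γ` the position sets strictly increase,
`α c₀ ⊂ α c₁ ⊂ ⋯ ⊂ α c_m`, and the label of the `k`-th step is the least element entering at
that step. Labels of different steps therefore lie in disjoint increments and are distinct, and
the least element of `α v \ α u` is the label of the step at which it enters.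

Strict monotonicity holds because `α` is injective and monotone for the weak order. For the
latter, lexicographic minimality makes `α w` the greedy position set: scan `γ^∞` and take each
position whose letter is a left descent of what remains of `w`. The lifting property of the weak
order (if `u ≤ v` and `s` is a left descent of `v` but not of `u`, then `u ≤ s v`) shows, by
induction on `ℓ(v)`, that every position taken by the scan for `u` is taken by the scan for `v`.
The lifting property comes from the exchange
condition, which we derive from the representation of `W` on `W × ZMod 2` in which `sᵢ` acts by
`(t, ε) ↦ (sᵢ t sᵢ, ε + [t = sᵢ])`: it makes the parity of the number of occurrences of a
reflection in the left inversion sequence of a word depend only on the product of the word.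
-/

section FinsetChains

open Finset List

lemma cambLabel_id_eq_min' {s t : Finset ℕ} (h : (t \ s).Nonempty) :
    cambLabel id s t = (t \ s).min' h := by
  rw [cambLabel, id, id, ← Finset.coe_min' h, WithTop.untopD_coe]

lemma cambLabel_id_mem_sdiff {s t : Finset ℕ} (h : s ⊂ t) : cambLabel id s t ∈ t \ s := by
  have hne : (t \ s).Nonempty := Finset.sdiff_nonempty.mpr (not_subset_of_ssubset h)
  exact cambLabel_id_eq_min' hne ▸ (t \ s).min'_mem hne

lemma labelSeqC_cons_cons {X : Type*} (lab : X → X → ℕ) (x y : X) (l : List X) :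
    labelSeqC lab (x :: y :: l) = lab x y :: labelSeqC lab (y :: l) := rfl

lemma subset_of_isChain_ssubset {s v : Finset ℕ} {l : List (Finset ℕ)}
    (hc : (s :: l).IsChain (· ⊂ ·)) (hv : (s :: l).getLast? = some v) : s ⊆ v := by
  induction l generalizing s with
  | nil => simp_all
  | cons t l ih =>
    rw [isChain_cons_cons] at hc
    exact hc.1.subset.trans (ih hc.2 hv)

lemma notMem_of_mem_labelSeqC {s : Finset ℕ} {l : List (Finset ℕ)}
    (hc : (s :: l).IsChain (· ⊂ ·)) {x : ℕ} (hx : x ∈ labelSeqC (cambLabel id) (s :: l)) :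
    x ∉ s := by
  induction l generalizing s with
  | nil => simp [labelSeqC] at hx
  | cons t l ih =>
    rw [isChain_cons_cons] at hc
    rcases List.mem_cons.mp hx with rfl | hx
    · exact (mem_sdiff.mp (cambLabel_id_mem_sdiff hc.1)).2
    · exact fun hxs => ih hc.2 hx (hc.1.subset hxs)

lemma nodup_labelSeqC_of_isChain_ssubset {l : List (Finset ℕ)} (hc : l.IsChain (· ⊂ ·)) :
    (labelSeqC (cambLabel id) l).Nodup := by
  induction l with
  | nil => exact List.nodup_nil
  | cons s l ih =>
    cases l with
    | nil => exact List.nodup_nil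
    | cons t l =>
      rw [isChain_cons_cons] at hc
      rw [labelSeqC_cons_cons, List.nodup_cons]
      exact ⟨fun hmem => notMem_of_mem_labelSeqC hc.2 hmem
        (mem_sdiff.mp (cambLabel_id_mem_sdiff hc.1)).1, ih hc.2⟩

lemma min'_sdiff_mem_labelSeqC_of_isChain_ssubset {s v : Finset ℕ} {l : List (Finset ℕ)}
    (hc : l.IsChain (· ⊂ ·)) (hs : l.head? = some s) (hv : l.getLast? = some v)
    (h : (v \ s).Nonempty) : (v \ s).min' h ∈ labelSeqC (cambLabel id) l := by
  obtain ⟨l, rfl⟩ : ∃ l', l = s :: l' := by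
    cases l with
    | nil => simp at hs
    | cons x l => exact ⟨l, by simpa using hs⟩
  clear hs
  induction l generalizing s with
  | nil =>
    obtain rfl : s = v := by simpa using hv
    simp at h
  | cons t l ih =>
    rw [isChain_cons_cons] at hc
    rw [getLast?_cons_cons] at hv
    set m := (v \ s).min' h
    obtain ⟨hmv, hms⟩ := mem_sdiff.mp ((v \ s).min'_mem h)
    rw [labelSeqC_cons_cons]
    by_cases hmt : m ∈ t
    · have hmts : m ∈ t \ s := mem_sdiff.mpr ⟨hmt, hms⟩
      have htv : t \ s ⊆ v \ s := sdiff_subset_sdiff (subset_of_isChain_ssubset hc.2 hv) le_rfl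
      refine List.mem_cons.mpr (Or.inl ?_)
      rw [cambLabel_id_eq_min' ⟨m, hmts⟩]
      exact le_antisymm (min'_subset ⟨m, hmts⟩ htv) (min'_le _ _ hmts)
    · have hmvt : m ∈ v \ t := mem_sdiff.mpr ⟨hmv, hmt⟩
      have hvt : v \ t ⊆ v \ s := sdiff_subset_sdiff le_rfl hc.1.subset
      have hm : (v \ t).min' ⟨m, hmvt⟩ = m :=
        le_antisymm (min'_le _ _ hmvt) (min'_subset ⟨m, hmvt⟩ hvt)
      exact List.mem_cons_of_mem _ (hm ▸ ih (hc := hc.2) (hv := hv) (h := ⟨m, hmvt⟩))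

lemma labelSeqC_cambLabel_eq_map {X : Type*} (f : X → Finset ℕ) (c : List X) :
    labelSeqC (cambLabel f) c = labelSeqC (cambLabel id) (c.map f) := by
  rw [labelSeqC, labelSeqC, ← List.map_tail, List.zipWith_map]
  rfl

end FinsetChains

lemma Finset.sort_insert_of_forall_lt {a : ℕ} {A : Finset ℕ} (h : ∀ b ∈ A, a < b) :
    (insert a A).sort (· ≤ ·) = a :: A.sort (· ≤ ·) :=
  Finset.sort_insert _ (fun b hb => (h b hb).le) (fun ha => lt_irrefl a (h a ha))

lemma posWord_insert_of_forall_lt {B : Type*} {γword : List B} (hne : γword ≠ []) {a : ℕ}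
    {A : Finset ℕ} (h : ∀ b ∈ A, a < b) :
    posWord γword hne (insert a A) = gammaLetter γword hne a :: posWord γword hne A := by
  rw [posWord, Finset.sort_insert_of_forall_lt h, List.map_cons, posWord]

namespace CoxeterSystem

open List

variable {B W : Type*} [Group W] {M : CoxeterMatrix B} (cs : CoxeterSystem M W)

local prefix:100 "s" => cs.simple
local prefix:100 "π" => cs.wordProd
local prefix:100 "ℓ" => cs.length
local prefix:100 "lis " => cs.leftInvSeq

section ReflectionSign

open scoped Classical

lemma simple_mul_mul_simple_eq_iff (i : B) (t x : W) : s i * t * s i = x ↔ t = s i * x * s i := by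
  constructor <;> rintro rfl <;> simp [mul_assoc]

noncomputable def reflSignFun (i : B) (p : W × ZMod 2) : W × ZMod 2 :=
  (s i * p.1 * s i, p.2 + if p.1 = s i then 1 else 0)

lemma reflSignFun_involutive (i : B) : Function.Involutive (cs.reflSignFun i) := by
  rintro ⟨t, ε⟩
  simp only [reflSignFun, simple_mul_mul_simple_eq_iff, simple_mul_simple_self, one_mul]
  ext
  · simp [mul_assoc]
  · split_ifs <;> simp [add_assoc, ZModModule.add_self]

noncomputable def reflSign (i : B) : Equiv.Perm (W × ZMod 2) :=
  (cs.reflSignFun_involutive i).toPerm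

lemma reflSign_apply (i : B) (t : W) (ε : ZMod 2) :
    cs.reflSign i (t, ε) = (s i * t * s i, ε + if t = s i then 1 else 0) := rfl

lemma conj_eq_pow_mul_simple_iff (i j : B) (t : W) (e : ℕ) :
    s i * s j * t * (s j * s i) = (s j * s i) ^ e * s j ↔ t = (s j * s i) ^ (e + 2) * s j := by
  have hinv : (s j * s i)⁻¹ = s i * s j := by simp
  have hconj : (s j * s i) * ((s j * s i) ^ e * s j) * (s j * s i)⁻¹ =
      (s j * s i) ^ (e + 2) * s j := by
    rw [hinv, ← mul_assoc (s j * s i), ← pow_succ', pow_succ _ (e + 1)]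
    simp [mul_assoc]
  rw [← hinv, ← hconj]
  constructor
  · rintro h
    rw [← h]
    simp [mul_assoc]
  · rintro rfl
    simp [mul_assoc]

lemma reflSign_mul_reflSign_apply (i j : B) (t : W) (ε : ZMod 2) :
    (cs.reflSign i * cs.reflSign j) (t, ε) =
      (s i * s j * t * (s j * s i),
        ε + ∑ e ∈ Finset.range 2, if t = (s j * s i) ^ e * s j then 1 else 0) := by
  simp only [Equiv.Perm.mul_apply, reflSign_apply, Finset.sum_range_succ, Finset.sum_range_zero,
    pow_zero, pow_one, one_mul, zero_add, simple_mul_mul_simple_eq_iff, add_assoc]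
  ext
  · simp [mul_assoc]
  · rfl

lemma pow_reflSign_mul_reflSign_apply (i j : B) (k : ℕ) (t : W) (ε : ZMod 2) :
    ((cs.reflSign i * cs.reflSign j) ^ k) (t, ε) =
      ((s i * s j) ^ k * t * (s j * s i) ^ k,
        ε + ∑ e ∈ Finset.range (2 * k), if t = (s j * s i) ^ e * s j then 1 else 0) := by
  induction k generalizing t ε with
  | zero => simp
  | succ k ih =>
    rw [pow_succ, Equiv.Perm.mul_apply, reflSign_mul_reflSign_apply, ih]
    ext
    · rw [pow_succ (s i * s j), pow_succ' (s j * s i)]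
      simp only [mul_assoc]
    · rw [mul_add, mul_one, add_comm (2 * k) 2, Finset.sum_range_add, add_assoc]
      simp only [conj_eq_pow_mul_simple_iff, add_comm 2]

lemma isLiftable_reflSign : M.IsLiftable cs.reflSign := by
  intro i j
  ext ⟨t, ε⟩ : 1
  -- as `(s j * s i) ^ M i j = 1`, the summands at `e` and `M i j + e` agree and cancel mod 2
  rw [pow_reflSign_mul_reflSign_apply, cs.simple_mul_simple_pow, cs.simple_mul_simple_pow',
    two_mul, Finset.sum_range_add]
  simp only [pow_add, cs.simple_mul_simple_pow', one_mul, mul_one, CharTwo.add_self_eq_zero,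
    add_zero]
  rfl

noncomputable def reflSignRep : W →* Equiv.Perm (W × ZMod 2) :=
  cs.lift ⟨cs.reflSign, cs.isLiftable_reflSign⟩

lemma reflSignRep_wordProd (ω : List B) (t : W) (ε : ZMod 2) :
    cs.reflSignRep (π ω) (t, ε) =
      (π ω * t * (π ω)⁻¹, ε + ((lis ω).count (π ω * t * (π ω)⁻¹) : ZMod 2)) := by
  induction ω generalizing t ε with
  | nil => simp
  | cons i ω ih =>
    rw [wordProd_cons, map_mul, Equiv.Perm.mul_apply, ih, reflSignRep, lift_apply_simple,
      reflSign_apply]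
    have hconj : s i * (π ω * t * (π ω)⁻¹) * s i = s i * π ω * t * (s i * π ω)⁻¹ := by
      simp [mul_assoc]
    set t' := π ω * t * (π ω)⁻¹
    have hconj' : s i * t' * s i = MulAut.conj (s i) t' := by simp
    simp only [← hconj, leftInvSeq, count_cons, hconj',
      count_map_of_injective _ _ (MulAut.conj (s i)).injective]
    simp only [← hconj', beq_iff_eq, eq_comm (a := s i), simple_mul_mul_simple_eq_iff,
      simple_mul_simple_self, one_mul]
    push_cast
    rw [add_assoc]

lemma count_leftInvSeq_eq_of_wordProd_eq {ω ω' : List B} (h : π ω = π ω') (t : W) :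
    ((lis ω).count t : ZMod 2) = (lis ω').count t := by
  have hcount : ∀ ω'' : List B, π ω'' = π ω →
      (cs.reflSignRep (π ω) ((π ω)⁻¹ * t * π ω, 0)).2 = (lis ω'').count t := by
    intro ω'' h''
    rw [← h'', reflSignRep_wordProd]
    simp [mul_assoc]
  exact (hcount ω rfl).symm.trans (hcount ω' h.symm)

end ReflectionSign

lemma mem_leftInvSeq_of_isLeftDescent {ω : List B} {i : B}
    (h : cs.IsLeftDescent (π ω) i) : s i ∈ lis ω := by
  classical
  obtain ⟨τ, hτ, hτω⟩ := cs.exists_isReduced (s i * π ω)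
  have hprod : π (i :: τ) = π ω := by
    rw [wordProd_cons, ← hτω, simple_mul_simple_cancel_left]
  have hred : cs.IsReduced (i :: τ) := by
    rw [IsReduced, hprod, length_cons, ← hτ.eq, ← hτω, (cs.isLeftDescent_iff).mp h]
  -- the parity of the number of occurrences of `s i` depends only on `π ω`
  have hodd : ((lis (i :: τ)).count (s i) : ZMod 2) = 1 := by
    rw [count_eq_one_of_mem hred.nodup_leftInvSeq (by simp [leftInvSeq]), Nat.cast_one]
  by_contra hnot
  have := cs.count_leftInvSeq_eq_of_wordProd_eq hprod (s i)
  rw [hodd, count_eq_zero_of_not_mem hnot, Nat.cast_zero] at this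
  exact one_ne_zero this

theorem exists_eraseIdx_of_isLeftDescent {ω : List B} {i : B}
    (h : cs.IsLeftDescent (π ω) i) : ∃ j < ω.length, s i * π ω = π (ω.eraseIdx j) := by
  obtain ⟨j, hj, hget⟩ := getElem_of_mem (cs.mem_leftInvSeq_of_isLeftDescent h)
  refine ⟨j, by simpa using hj, ?_⟩
  rw [← hget, ← getD_eq_getElem _ 1 hj]
  exact cs.getD_leftInvSeq_mul_wordProd ω j

lemma isLeftDescent_of_isReduced_cons {i : B} {ω : List B} (h : cs.IsReduced (i :: ω)) :
    cs.IsLeftDescent (π (i :: ω)) i := by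
  have hω : cs.IsReduced ω := h.drop 1
  rw [IsLeftDescent, wordProd_cons, simple_mul_simple_cancel_left, hω, ← wordProd_cons, h,
    length_cons]
  omega

lemma length_wordProd_eraseIdx_lt {ω : List B} {j : ℕ} (hj : j < ω.length) :
    ℓ (π (ω.eraseIdx j)) < ω.length :=
  (cs.length_wordProd_le _).trans_lt (by rw [length_eraseIdx_of_lt hj]; omega)

section WeakOrder

variable {cs} {u v : W} {i : B}

lemma isLeftDescent_of_weakLE (huv : WeakLE cs u v) (hu : cs.IsLeftDescent u i) :
    cs.IsLeftDescent v i := by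
  have hle := cs.length_mul_le (s i * u) (u⁻¹ * v)
  rw [mul_assoc, mul_inv_cancel_left] at hle
  unfold WeakLE at huv
  unfold IsLeftDescent at *
  omega

lemma simple_mul_weakLE_simple_mul (huv : WeakLE cs u v) (hu : cs.IsLeftDescent u i) :
    WeakLE cs (s i * u) (s i * v) := by
  have hv := cs.isLeftDescent_iff.mp (isLeftDescent_of_weakLE huv hu)
  have hu := cs.isLeftDescent_iff.mp hu
  have hinv : (s i * u)⁻¹ * (s i * v) = u⁻¹ * v := by simp [mul_assoc]
  unfold WeakLE at *
  rw [hinv]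
  omega

lemma weakLE_simple_mul_of_not_isLeftDescent (huv : WeakLE cs u v) (hv : cs.IsLeftDescent v i)
    (hu : ¬cs.IsLeftDescent u i) : WeakLE cs u (s i * v) := by
  obtain ⟨ωu, hωu, rfl⟩ := cs.exists_isReduced u
  obtain ⟨ωc, hωc, hc⟩ := cs.exists_isReduced ((π ωu)⁻¹ * v)
  have hv' : v = π (ωu ++ ωc) := by rw [wordProd_append, ← hc, mul_inv_cancel_left]
  obtain ⟨j, hj, hexch⟩ := cs.exists_eraseIdx_of_isLeftDescent (hv' ▸ hv)
  rw [length_append] at hj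
  by_cases hju : j < ωu.length
  · rw [eraseIdx_append_of_lt_length hju, wordProd_append, wordProd_append, ← mul_assoc]
      at hexch
    refine absurd ?_ hu
    rw [IsLeftDescent, mul_right_cancel hexch, hωu]
    exact cs.length_wordProd_eraseIdx_lt hju
  · rw [eraseIdx_append_of_length_le (by omega), ← hv', wordProd_append] at hexch
    have hshort : ℓ ((π ωu)⁻¹ * (s i * v)) < ℓ ((π ωu)⁻¹ * v) := by
      rw [hexch, inv_mul_cancel_left, hc, hωc]
      exact cs.length_wordProd_eraseIdx_lt (by omega)
    have hle := cs.length_mul_le (π ωu) ((π ωu)⁻¹ * (s i * v))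
    rw [mul_inv_cancel_left] at hle
    have hv := cs.isLeftDescent_iff.mp hv
    unfold WeakLE at *
    omega

end WeakOrder

section SortingWords

variable {γword : List B} (hne : γword ≠ [])

lemma exists_isLeftDescent_gammaLetter (hall : ∀ b : B, b ∈ γword) {w : W} (hw : w ≠ 1)
    (N : ℕ) : ∃ p, N ≤ p ∧ cs.IsLeftDescent w (gammaLetter γword hne p) := by
  obtain ⟨b, hb⟩ := cs.exists_leftDescent_of_ne_one hw
  obtain ⟨k, hk, rfl⟩ := getElem_of_mem (hall b)
  refine ⟨k + γword.length * N, ?_, ?_⟩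
  · exact le_add_left (Nat.le_mul_of_pos_left N (length_pos_iff.mpr hne))
  · simpa [gammaLetter, Nat.add_mul_mod_self_left, Nat.mod_eq_of_lt hk] using hb

open scoped Classical in
/-- Junk value `0` when no position `p ≥ N` of `γ^∞` carries a left descent of `w`. -/
noncomputable def firstDescentPos (N : ℕ) (w : W) : ℕ :=
  if h : ∃ p, N ≤ p ∧ cs.IsLeftDescent w (gammaLetter γword hne p) then Nat.find h else 0

lemma firstDescentPos_spec (hall : ∀ b : B, b ∈ γword) {w : W} (hw : w ≠ 1) (N : ℕ) :
    N ≤ cs.firstDescentPos hne N w ∧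
      cs.IsLeftDescent w (gammaLetter γword hne (cs.firstDescentPos hne N w)) := by
  classical
  have h := cs.exists_isLeftDescent_gammaLetter hne hall hw N
  rw [firstDescentPos, dif_pos h]
  exact Nat.find_spec h

lemma firstDescentPos_le {w : W} {N p : ℕ} (hNp : N ≤ p)
    (hp : cs.IsLeftDescent w (gammaLetter γword hne p)) : cs.firstDescentPos hne N w ≤ p := by
  classical
  have h : ∃ p, N ≤ p ∧ cs.IsLeftDescent w (gammaLetter γword hne p) := ⟨p, hNp, hp⟩
  rw [firstDescentPos, dif_pos h]
  exact Nat.find_min' h ⟨hNp, hp⟩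

lemma firstDescentPos_eq_of_le (hall : ∀ b : B, b ∈ γword) {w : W} (hw : w ≠ 1) {N N' : ℕ}
    (hNN' : N ≤ N') (hN' : N' ≤ cs.firstDescentPos hne N w) :
    cs.firstDescentPos hne N' w = cs.firstDescentPos hne N w := by
  obtain ⟨-, hd⟩ := cs.firstDescentPos_spec hne hall hw N
  obtain ⟨hle, hd'⟩ := cs.firstDescentPos_spec hne hall hw N'
  exact le_antisymm (cs.firstDescentPos_le hne hN' hd)
    (cs.firstDescentPos_le hne (hNN'.trans hle) hd')

open scoped Classical in
/-- The lexicographically first set of positions `≥ N` in `γ^∞` that spells a reduced word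
for `w`. -/
noncomputable def greedyPositions (hall : ∀ b : B, b ∈ γword) (N : ℕ) (w : W) : Finset ℕ :=
  if w = 1 then ∅
  else insert (cs.firstDescentPos hne N w)
    (greedyPositions hall (cs.firstDescentPos hne N w + 1)
      (s (gammaLetter γword hne (cs.firstDescentPos hne N w)) * w))
termination_by cs.length w
decreasing_by exact (cs.firstDescentPos_spec hne hall ‹_› N).2

variable (hall : ∀ b : B, b ∈ γword)

lemma greedyPositions_one (N : ℕ) : cs.greedyPositions hne hall N 1 = ∅ := by
  rw [greedyPositions, if_pos rfl]

lemma greedyPositions_of_ne_one {w : W} (hw : w ≠ 1) (N : ℕ) :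
    cs.greedyPositions hne hall N w = insert (cs.firstDescentPos hne N w)
      (cs.greedyPositions hne hall (cs.firstDescentPos hne N w + 1)
        (s (gammaLetter γword hne (cs.firstDescentPos hne N w)) * w)) := by
  rw [greedyPositions, if_neg hw]

lemma le_of_mem_greedyPositions {N p : ℕ} {w : W} (hp : p ∈ cs.greedyPositions hne hall N w) :
    N ≤ p := by
  induction N, w using greedyPositions.induct cs hne hall with
  | case1 N => simp [greedyPositions_one] at hp
  | case2 N w hw ih =>
    rw [greedyPositions_of_ne_one cs hne hall hw] at hp
    have hN := (cs.firstDescentPos_spec hne hall hw N).1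
    rcases Finset.mem_insert.mp hp with rfl | hp
    · exact hN
    · exact hN.trans (Nat.le_of_succ_le (ih hp))

lemma wordProd_posWord_greedyPositions (N : ℕ) (w : W) :
    π (posWord γword hne (cs.greedyPositions hne hall N w)) = w ∧
      cs.IsReduced (posWord γword hne (cs.greedyPositions hne hall N w)) := by
  induction N, w using greedyPositions.induct cs hne hall with
  | case1 N => simp [greedyPositions_one, posWord, IsReduced]
  | case2 N w hw ih =>
    obtain ⟨-, hd⟩ := cs.firstDescentPos_spec hne hall hw N
    rw [greedyPositions_of_ne_one cs hne hall hw,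
      posWord_insert_of_forall_lt hne (fun _ hb => cs.le_of_mem_greedyPositions hne hall hb)]
    obtain ⟨hprod, hred⟩ := ih
    refine ⟨by rw [wordProd_cons, hprod, simple_mul_simple_cancel_left], ?_⟩
    rw [IsReduced, wordProd_cons, hprod, simple_mul_simple_cancel_left, length_cons, ← hred,
      hprod, cs.isLeftDescent_iff.mp hd]

lemma greedyPositions_eq_or_lex {N : ℕ} {w : W} {A : Finset ℕ} (hA : ∀ p ∈ A, N ≤ p)
    (hprod : π (posWord γword hne A) = w) (hred : cs.IsReduced (posWord γword hne A)) :
    cs.greedyPositions hne hall N w = A ∨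
      Lex (· < ·) ((cs.greedyPositions hne hall N w).sort (· ≤ ·)) (A.sort (· ≤ ·)) := by
  induction N, w using greedyPositions.induct cs hne hall generalizing A with
  | case1 N =>
    have hlen : (posWord γword hne A).length = 0 := by rw [← hred, hprod, length_one]
    left
    simpa [greedyPositions_one, posWord, eq_comm] using hlen
  | case2 N w hw ih =>
    obtain ⟨a, A', haA', rfl⟩ : ∃ a A', (∀ b ∈ A', a < b) ∧ A = insert a A' := by
      have hA0 : A.Nonempty := by
        rw [Finset.nonempty_iff_ne_empty]
        rintro rfl
        exact hw (by simpa [posWord] using hprod.symm)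
      exact ⟨A.min' hA0, A.erase (A.min' hA0), fun b hb => A.min'_lt_of_mem_erase_min' hA0 hb,
        (Finset.insert_erase (A.min'_mem hA0)).symm⟩
    rw [posWord_insert_of_forall_lt hne haA'] at hprod hred
    have hdesc := hprod ▸ cs.isLeftDescent_of_isReduced_cons hred
    have hda : cs.firstDescentPos hne N w ≤ a :=
      cs.firstDescentPos_le hne (hA a (Finset.mem_insert_self _ _)) hdesc
    rw [greedyPositions_of_ne_one cs hne hall hw, Finset.sort_insert_of_forall_lt haA',
      Finset.sort_insert_of_forall_lt (fun _ hb => cs.le_of_mem_greedyPositions hne hall hb)]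
    rcases hda.lt_or_eq with hlt | heq
    · exact Or.inr (Lex.rel hlt)
    · rw [heq] at ih ⊢
      have hw' : π (posWord γword hne A') = s (gammaLetter γword hne a) * w := by
        rw [← hprod, wordProd_cons, simple_mul_simple_cancel_left]
      rcases ih haA' hw' (hred.drop 1) with h | h
      · exact Or.inl (by rw [h])
      · exact Or.inr (Lex.cons h)

lemma greedyPositions_eq_of_le {w : W} (hw : w ≠ 1) {N N' : ℕ} (hNN' : N ≤ N')
    (hN' : N' ≤ cs.firstDescentPos hne N w) :
    cs.greedyPositions hne hall N' w = cs.greedyPositions hne hall N w := by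
  rw [greedyPositions_of_ne_one cs hne hall hw N, greedyPositions_of_ne_one cs hne hall hw N',
    cs.firstDescentPos_eq_of_le hne hall hw hNN' hN']

theorem greedyPositions_subset_of_weakLE {u v : W} (huv : WeakLE cs u v) (N : ℕ) :
    cs.greedyPositions hne hall N u ⊆ cs.greedyPositions hne hall N v := by
  by_cases hu : u = 1
  · rw [hu, greedyPositions_one]
    exact Finset.empty_subset _
  have hv : v ≠ 1 := by
    rintro rfl
    rw [WeakLE, length_one] at huv
    exact hu (cs.length_eq_zero_iff.mp (by omega))
  obtain ⟨hNu, hdu⟩ := cs.firstDescentPos_spec hne hall hu N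
  obtain ⟨hNv, hdv⟩ := cs.firstDescentPos_spec hne hall hv N
  have hle : cs.firstDescentPos hne N v ≤ cs.firstDescentPos hne N u :=
    cs.firstDescentPos_le hne hNu (isLeftDescent_of_weakLE huv hdu)
  rw [greedyPositions_of_ne_one cs hne hall hv]
  rcases hle.lt_or_eq with hlt | heq
  · -- the scan for `v` takes a position the scan for `u` skips; by lifting, `u` stays below
    have hndu : ¬cs.IsLeftDescent u (gammaLetter γword hne (cs.firstDescentPos hne N v)) :=
      fun h => (cs.firstDescentPos_le hne hNv h).not_gt hlt
    rw [← cs.greedyPositions_eq_of_le hne hall hu (Nat.le_succ_of_le hNv) hlt]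
    exact (greedyPositions_subset_of_weakLE (weakLE_simple_mul_of_not_isLeftDescent huv hdv hndu)
      _).trans (Finset.subset_insert _ _)
  · rw [greedyPositions_of_ne_one cs hne hall hu, heq]
    exact Finset.insert_subset_insert _
      (greedyPositions_subset_of_weakLE (simple_mul_weakLE_simple_mul huv hdu) _)
termination_by cs.length v
decreasing_by all_goals first | exact hdv | exact heq ▸ hdv

end SortingWords

end CoxeterSystem

namespace IsSortingMap

variable {B W : Type*} [Group W] {M : CoxeterMatrix B} {cs : CoxeterSystem M W}
  {γword : List B} {hne : γword ≠ []} {α : W → Finset ℕ}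

theorem injective (hα : IsSortingMap cs γword hne α) : Function.Injective α := fun u v h => by
  rw [← (hα u).1.1, ← (hα v).1.1, h]

theorem eq_greedyPositions (hα : IsSortingMap cs γword hne α) (hall : ∀ b : B, b ∈ γword)
    (w : W) : α w = cs.greedyPositions hne hall 0 w := by
  obtain ⟨⟨hprod, hred⟩, hmin⟩ := hα w
  obtain ⟨hgprod, hgred⟩ := cs.wordProd_posWord_greedyPositions hne hall 0 w
  rcases hmin _ hgprod hgred with h | hlt
  · exact h
  rcases cs.greedyPositions_eq_or_lex hne hall (fun p _ => p.zero_le) hprod hred with h | hgt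
  · exact h.symm
  · exact absurd hgt (asymm hlt)

theorem subset_of_weakLE (hα : IsSortingMap cs γword hne α) (hall : ∀ b : B, b ∈ γword)
    {u v : W} (huv : WeakLE cs u v) : α u ⊆ α v := by
  rw [hα.eq_greedyPositions hall, hα.eq_greedyPositions hall]
  exact cs.greedyPositions_subset_of_weakLE hne hall huv 0

theorem ssubset_of_covC (hα : IsSortingMap cs γword hne α) (hall : ∀ b : B, b ∈ γword)
    {Sortable : W → Prop} {u v : W} (h : CovC Sortable (WeakLE cs) u v) : α u ⊂ α v :=
  (hα.subset_of_weakLE hall h.2.2.1).ssubset_of_ne (hα.injective.ne h.2.2.2.1)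

end IsSortingMap

theorem stmt14_general {B W : Type*} [Group W] {M : CoxeterMatrix B}
    (cs : CoxeterSystem M W)
    (γword : List B) (hne : γword ≠ [])
    (hγ : γword.Nodup ∧ ∀ b : B, b ∈ γword)
    (α : W → Finset ℕ) (hα : IsSortingMap cs γword hne α)
    (u v : W)
    (hdiff : (α v \ α u).Nonempty) :
    ∀ c : List W,
      MaxChainC (SortableVia γword.length α) (WeakLE cs) u v c →
      (α v \ α u).min' hdiff ∈ labelSeqC (cambLabel α) c ∧
      (labelSeqC (cambLabel α) c).Nodup := by
  rintro c ⟨hchain, hhead, hlast, -⟩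
  have hsets : (c.map α).IsChain (· ⊂ ·) :=
    (List.isChain_map α).mpr (List.IsChain.imp (fun _ _ => hα.ssubset_of_covC hγ.2) hchain)
  rw [labelSeqC_cambLabel_eq_map]
  exact ⟨min'_sdiff_mem_labelSeqC_of_isChain_ssubset hsets (by simp [hhead]) (by simp [hlast])
    hdiff, nodup_labelSeqC_of_isChain_ssubset hsets⟩

/-- Let `u ≤_γ v` in the Cambrian semilattice and `i₀ = min (α_γ(v) \ α_γ(u))`. Then
(i) the label `i₀` appears on every maximal chain of `[u,v]_γ`, and (ii) the labels
along any maximal chain of `[u,v]_γ` are pairwise distinct. -/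
theorem stmt14 {B W : Type*} [Finite B] [Group W] {M : CoxeterMatrix B}
    (cs : CoxeterSystem M W)
    (γword : List B) (hne : γword ≠ [])
    (hγ : γword.Nodup ∧ ∀ b : B, b ∈ γword)
    (α : W → Finset ℕ) (hα : IsSortingMap cs γword hne α)
    (u v : W)
    (hu : SortableVia γword.length α u) (hv : SortableVia γword.length α v)
    (huv : WeakLE cs u v) (hdiff : (α v \ α u).Nonempty) :
    ∀ c : List W,
      MaxChainC (SortableVia γword.length α) (WeakLE cs) u v c →
      (α v \ α u).min' hdiff ∈ labelSeqC (cambLabel α) c ∧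
      (labelSeqC (cambLabel α) c).Nodup :=
  stmt14_general cs γword hne hγ α hα u v hdiff
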